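/- Let W be a finite set of ground terms. The relation S₁ ~_W S₂, defined by E_{S₁} = E_{S₂} where E_S is the equivalence relation on W given by E_S(t₁,t₂) iff val_S(t₁) = val_S(t₂), is an equivalence relation on states, and it has only finitely many equivalence classes. Consequently, a sequential algorithm P with bounded exploration witness W admits a finite representation by finitely many pairs (φᵢ, Δᵢ), where φᵢ is a Boolean condition characterising one ~_W-class and Δᵢ is the common update set of P on that class. -/

import Mathlib

namespace RSAT

open scoped Classical

/-- Ground terms over a set `F` of function symbols. -/
inductive Term (F : Type) : Type where
  | app : F → List (Term F) → Term F

/-- A state over `F` with (extended) base set `V`: an interpretation of every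
function symbol over `V`. -/
structure State (F V : Type) where
  interp : F → List V → V

mutual
  /-- Evaluation of a ground term in a state. -/
  def eval {F V : Type} (S : State F V) : Term F → V
    | .app f ts => S.interp f (evalList S ts)
  def evalList {F V : Type} (S : State F V) : List (Term F) → List V
    | [] => []
    | t :: ts => eval S t :: evalList S ts
end

mutual
  /-- The function symbols occurring in a term. -/
  def symsOf {F : Type} : Term F → Set F
    | .app f ts => insert f (symsOfList ts)
  def symsOfList {F : Type} : List (Term F) → Set F
    | [] => ∅
    | t :: ts => symsOf t ∪ symsOfList ts
end

/-- The subterm relation. -/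
inductive Subterm {F : Type} : Term F → Term F → Prop where
  | refl (t : Term F) : Subterm t t
  | child {t t' : Term F} {f : F} {ts : List (Term F)} :
      t' ∈ ts → Subterm t t' → Subterm t (.app f ts)

/-- A location: a function symbol together with a tuple of arguments. -/
structure Location (F V : Type) where
  sym : F
  args : List V

/-- An update set: a set of pairs of locations and values. -/
abbrev UpdateSet (F V : Type) := Set (Location F V × V)

/-- Elements of update multisets: plain updates and shared (partial) updates. -/
inductive UElem (F V : Type) where
  | upd : Location F V → V → UElem F V
  | shared : Location F V → F → List V → UElem F V

/-- An update multiset, containing updates and shared updates. -/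
abbrev UpdateMultiset (F V : Type) := Multiset (UElem F V)

/-- Sequential ASM rules: assignments, branching, bounded parallel composition
and partial assignments. -/
inductive Rule (F : Type) : Type where
  | assign : F → List (Term F) → Term F → Rule F
  | branch : Term F → Rule F → Rule F → Rule F
  | par : List (Rule F) → Rule F
  | partialAssign : F → F → List (Term F) → List (Term F) → Rule F

mutual
  /-- All terms used in a rule. -/
  def ruleTerms {F : Type} : Rule F → Set (Term F)
    | .assign _ ts t0 => {t | t ∈ ts} ∪ {t0}
    | .branch φ r1 r2 => {φ} ∪ ruleTerms r1 ∪ ruleTerms r2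
    | .par rs => ruleTermsList rs
    | .partialAssign _ _ ts ts' => {t | t ∈ ts} ∪ {t | t ∈ ts'}
  def ruleTermsList {F : Type} : List (Rule F) → Set (Term F)
    | [] => ∅
    | r :: rs => ruleTerms r ∪ ruleTermsList rs
end

mutual
  /-- The update multiset yielded by a rule in a state (`tt` is the truth value *true*). -/
  noncomputable def umset {F V : Type} (tt : V) (S : State F V) : Rule F → UpdateMultiset F V
    | .assign f ts t0 => {UElem.upd ⟨f, evalList S ts⟩ (eval S t0)}
    | .branch φ r1 r2 => if eval S φ = tt then umset tt S r1 else umset tt S r2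
    | .par rs => umsetList tt S rs
    | .partialAssign f op ts ts' => {UElem.shared ⟨f, evalList S ts⟩ op (evalList S ts')}
  noncomputable def umsetList {F V : Type} (tt : V) (S : State F V) : List (Rule F) → UpdateMultiset F V
    | [] => 0
    | r :: rs => umset tt S r + umsetList tt S rs
end

/-- The value of a location in a state. -/
def locVal {F V : Type} (S : State F V) (ℓ : Location F V) : V := S.interp ℓ.sym ℓ.args

/-- The multiset of shared updates at a given location. -/
noncomputable def sharedAt {F V : Type} (Δm : UpdateMultiset F V) (ℓ : Location F V) :
    Multiset (F × List V) :=
  Δm.filterMap (fun e => match e with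
    | .shared ℓ' op args => if ℓ' = ℓ then some (op, args) else none
    | .upd _ _ => none)

/-- `foldsTo S ℓ ms v` holds iff applying the shared updates in `ms` in some order,
starting from the value of `ℓ` in `S`, yields the value `v`. -/
def foldsTo {F V : Type} (S : State F V) (ℓ : Location F V) (ms : Multiset (F × List V))
    (v : V) : Prop :=
  ∃ l : List (F × List V), (l : Multiset (F × List V)) = ms ∧
    v = l.foldr (fun p acc => S.interp p.1 (acc :: p.2)) (locVal S ℓ)

/-- Collapsing an update multiset into an update set: plain updates are kept, and
shared updates on a location are merged. -/
def collapse {F V : Type} (S : State F V) (Δm : UpdateMultiset F V) : UpdateSet F V :=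
  {u | UElem.upd u.1 u.2 ∈ Δm} ∪
    {u | sharedAt Δm u.1 ≠ 0 ∧ foldsTo S u.1 (sharedAt Δm u.1) u.2}

/-- A consistent update set contains no clashes. -/
def Consistent {F V : Type} (Δ : UpdateSet F V) : Prop :=
  ∀ ℓ v w, (ℓ, v) ∈ Δ → (ℓ, w) ∈ Δ → v = w

/-- Applying an update set to a state: `S + Δ`. -/
noncomputable def applyU {F V : Type} (S : State F V) (Δ : UpdateSet F V) : State F V :=
  if Consistent Δ then
    ⟨fun f args => if h : ∃ v, (Location.mk f args, v) ∈ Δ then h.choose else S.interp f args⟩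
  else S

/-- The update set yielded by a rule in a state. -/
noncomputable def ruleUpd {F V : Type} (tt : V) (S : State F V) (r : Rule F) : UpdateSet F V :=
  collapse S (umset tt S r)

/-- The image of a state under an isomorphism (bijection of the base set). -/
def mapState {F V : Type} (σ : V ≃ V) (S : State F V) : State F V :=
  ⟨fun f args => σ (S.interp f (args.map σ.symm))⟩

/-- Coincidence of two states over a set of ground terms. -/
def CoincideW {F V : Type} (W : Set (Term F)) (S S' : State F V) : Prop :=
  ∀ t ∈ W, eval S t = eval S' t

/-- Strong coincidence of two states over a set of ground terms, w.r.t. an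
extraction function `β`: the terms of `W` have equal values, and the extracted
term tuples have equal values as well. -/
def StrongCoincideW {F V : Type} (W : Set (Term F)) (β : V → List (Term F))
    (S S' : State F V) : Prop :=
  CoincideW W S S' ∧ ∀ t ∈ W, ∀ u ∈ β (eval S t), eval S u = eval S' u

/-- The restriction of an update multiset to locations whose symbols are in `alg`. -/
noncomputable def restrictMAlg {F V : Type} (alg : Set F) (Δm : UpdateMultiset F V) :
    UpdateMultiset F V :=
  Δm.filter (fun e => (match e with | .upd ℓ _ => ℓ.sym | .shared ℓ _ _ => ℓ.sym) ∈ alg)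

/-- A reflective sequential algorithm (RSA), axiomatised by the sequential time,
abstract state, background and bounded exploration postulates. -/
structure RSA (F V : Type) where
  /-- the truth value *true* of the background -/
  tt : V
  states : Set (State F V)
  init : Set (State F V)
  init_sub : init ⊆ states
  /-- the one-step transition function -/
  tau : State F V → State F V
  tau_mem : ∀ S ∈ states, tau S ∈ states
  /-- the signature of a state -/
  sigma : State F V → Set F
  /-- the fixed subsignature representing the algorithm -/
  sigmaAlg : Set F
  alg_sub : ∀ S ∈ states, sigmaAlg ⊆ sigma S
  sigma_mono : ∀ S ∈ states, sigma S ⊆ sigma (tau S)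
  iso_states : ∀ σ : V ≃ V, σ tt = tt → ∀ S ∈ states, mapState σ S ∈ states
  iso_init : ∀ σ : V ≃ V, σ tt = tt → ∀ S ∈ init, mapState σ S ∈ init
  tau_iso : ∀ σ : V ≃ V, σ tt = tt → ∀ S ∈ states, tau (mapState σ S) = mapState σ (tau S)
  /-- the update multiset yielded in a state -/
  deltaM : State F V → UpdateMultiset F V
  /-- the update set yielded in a state -/
  delta : State F V → UpdateSet F V
  delta_collapse : ∀ S ∈ states, delta S = collapse S (deltaM S)
  delta_consistent : ∀ S ∈ states, Consistent (delta S)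
  tau_delta : ∀ S ∈ states, tau S = applyU S (delta S)
  delta_min : ∀ S ∈ states, ∀ ℓ v, (ℓ, v) ∈ delta S → locVal (tau S) ℓ = v ∧ locVal S ℓ ≠ v
  delta_diff : ∀ S ∈ states, ∀ ℓ, locVal (tau S) ℓ ≠ locVal S ℓ → (ℓ, locVal (tau S) ℓ) ∈ delta S
  /-- the extraction function of the background -/
  beta : V → List (Term F)
  /-- the reflective bounded exploration witness -/
  W : Finset (Term F)
  bexp : ∀ S ∈ states, ∀ S' ∈ states, StrongCoincideW (↑W) beta S S' → deltaM S = deltaM S'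
  bexp2 : ∀ S ∈ states, ∀ S' ∈ states, CoincideW (↑W) S S' →
    restrictMAlg sigmaAlg (deltaM S) = restrictMAlg sigmaAlg (deltaM S')
  init_alg : ∀ S1 ∈ init, ∀ S2 ∈ init, ∀ f ∈ sigmaAlg, ∀ args, S1.interp f args = S2.interp f args

variable {F V : Type}

/-- A term is standard iff it contains no function symbols from `Σ_alg`. -/
def stdTerm (A : RSA F V) (t : Term F) : Prop := ∀ f ∈ symsOf t, f ∉ A.sigmaAlg

/-- `W_st`: the standard terms of the witness. -/
def Wst (A : RSA F V) : Set (Term F) := {t | t ∈ A.W ∧ stdTerm A t}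

/-- `W_pt`: the program terms of the witness. -/
def Wpt (A : RSA F V) : Set (Term F) := {t | t ∈ A.W ∧ ¬ stdTerm A t}

/-- `W_β`: the terms extracted from the values of the program terms in a state. -/
def Wbeta (A : RSA F V) (S : State F V) : Set (Term F) :=
  {u | ∃ t ∈ Wpt A, u ∈ A.beta (eval S t)}

/-- `W_S = W_st ∪ W_β`, closed under subterms: the critical terms in `S`. -/
def WSet (A : RSA F V) (S : State F V) : Set (Term F) :=
  {u | ∃ t, (t ∈ Wst A ∨ t ∈ Wbeta A S) ∧ Subterm u t}

/-- A critical value in a state: the value of a critical term. -/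
def CriticalValue (A : RSA F V) (S : State F V) (v : V) : Prop :=
  ∃ t ∈ WSet A S, eval S t = v

/-- Strong coincidence over the witness of an RSA. -/
def StrongCoincide (A : RSA F V) (S S' : State F V) : Prop :=
  StrongCoincideW (↑A.W) A.beta S S'

/-- Coincidence over the witness of an RSA. -/
def Coincide (A : RSA F V) (S S' : State F V) : Prop := CoincideW (↑A.W) S S'

/-- WS-equivalence: `S'` is WS-equivalent to `S` iff the extracted term tuples
`β(val(t))` agree for all program terms `t ∈ W_pt`. -/
def WSEquiv (A : RSA F V) (S S' : State F V) : Prop :=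
  ∀ t ∈ Wpt A, A.beta (eval S' t) = A.beta (eval S t)

/-- W-similarity: the terms of `W` induce the same equivalence relation
(by equality of values) in both states. -/
def WSimilar (A : RSA F V) (S S' : State F V) : Prop :=
  ∀ t ∈ A.W, ∀ t' ∈ A.W, (eval S t = eval S t' ↔ eval S' t = eval S' t')

/-- Two states are isomorphic iff one is the image of the other under a bijection
of the base set fixing the background truth value. -/
def Isomorphic (A : RSA F V) (S₁ S₂ : State F V) : Prop :=
  ∃ σ : V ≃ V, σ A.tt = A.tt ∧ S₂ = mapState σ S₁

/-- `Δ^st`: restriction of an update set to the locations over `Σ_S − Σ_alg`. -/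
def restrictSt (A : RSA F V) (S : State F V) (Δ : UpdateSet F V) : UpdateSet F V :=
  {u | u ∈ Δ ∧ u.1.sym ∈ A.sigma S \ A.sigmaAlg}

/-- Rules that are parallel compositions of assignment and partial assignment rules. -/
inductive ParOfUpdates {F : Type} : Rule F → Prop where
  | assign (f : F) (ts : List (Term F)) (t0 : Term F) : ParOfUpdates (.assign f ts t0)
  | partialR (f op : F) (ts ts' : List (Term F)) : ParOfUpdates (.partialAssign f op ts ts')
  | par (rs : List (Rule F)) : (∀ r ∈ rs, ParOfUpdates r) → ParOfUpdates (.par rs)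

end RSAT
namespace RSAT

variable {F V : Type}

/-- A sequential algorithm in the sense of Gurevich's behavioural theory, with
a bounded exploration witness `W`. -/
structure SeqAlg (F V : Type) where
  states : Set (State F V)
  init : Set (State F V)
  init_sub : init ⊆ states
  tau : State F V → State F V
  tau_mem : ∀ S ∈ states, tau S ∈ states
  delta : State F V → UpdateSet F V
  tau_delta : ∀ S ∈ states, tau S = applyU S (delta S)
  /-- the bounded exploration witness -/
  W : Finset (Term F)
  bexp : ∀ S ∈ states, ∀ S' ∈ states, (∀ t ∈ W, eval S t = eval S' t) → delta S = delta S'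

/-- `S₁ ~_W S₂`: the terms of `W` induce the same equivalence relation
`E_S(t₁,t₂) ≡ val_S(t₁) = val_S(t₂)` in both states. -/
def SimW (W : Finset (Term F)) (S S' : State F V) : Prop :=
  ∀ t ∈ W, ∀ t' ∈ W, (eval S t = eval S t' ↔ eval S' t = eval S' t')

end RSAT

/-! `S ~_W S'` says exactly that the equality patterns `E_S, E_S' : W × W → Prop` coincide, so
`~_W` is the kernel of a map into the finite type `W × W → Prop`. The classes are then indexed
by the finitely many patterns realised by states, `φᵢ` says that a state realises the `i`-th
pattern, and `Δᵢ` is the update set of any state realising it. -/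

section KernelClasses

variable {α β γ : Type*} {s : Set α}

theorem Set.Finite.setOf_kernel_classes (κ : α → β) (hκ : (κ '' s).Finite) :
    {C : Set α | ∃ a ∈ s, C = {b | b ∈ s ∧ κ a = κ b}}.Finite := by
  refine (hκ.image fun x => {b | b ∈ s ∧ x = κ b}).subset ?_
  rintro C ⟨a, ha, rfl⟩
  exact ⟨κ a, Set.mem_image_of_mem κ ha, rfl⟩

theorem exists_fin_classes_of_finite_image (κ : α → β) (hκ : (κ '' s).Finite) (g : α → γ)
    (hg : ∀ a ∈ s, ∀ b ∈ s, κ a = κ b → g a = g b) :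
    ∃ (n : ℕ) (φ : Fin n → α → Prop) (Δ : Fin n → γ),
      (∀ a ∈ s, ∃! i : Fin n, φ i a) ∧
      (∀ i : Fin n, ∀ a ∈ s, φ i a → ∀ b, (φ i b ↔ κ a = κ b)) ∧
      (∀ i : Fin n, ∀ a ∈ s, φ i a → g a = Δ i) := by
  have := hκ.to_subtype
  let e := (Finite.equivFin (κ '' s)).symm
  refine ⟨_, fun i a => κ a = e i, fun i => g (e i).2.choose, ?_, ?_, ?_⟩
  · intro a ha
    refine ⟨e.symm ⟨κ a, a, ha, rfl⟩, by simp only [Equiv.apply_symm_apply], fun i hi => ?_⟩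
    rw [Equiv.eq_symm_apply]
    exact Subtype.ext hi.symm
  · intro i a _ hi b
    change κ b = _ ↔ _
    rw [← hi, eq_comm]
  · intro i a ha hi
    obtain ⟨hb, hκb⟩ := (e i).2.choose_spec
    exact hg a ha _ hb (hi.trans hκb.symm)

end KernelClasses

namespace RSAT

variable {F V : Type}

def eqPattern (W : Finset (Term F)) (S : State F V) : W × W → Prop :=
  fun p => eval S p.1 = eval S p.2

theorem simW_iff_eqPattern_eq (W : Finset (Term F)) (S S' : State F V) :
    SimW W S S' ↔ eqPattern W S = eqPattern W S' := by
  simp only [SimW, funext_iff, eqPattern, Prod.forall, Subtype.forall, eq_iff_iff]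

theorem simW_equivalence (W : Finset (Term F)) : Equivalence (SimW (V := V) W) :=
  ⟨fun _ _ _ _ _ => Iff.rfl, fun h t ht t' ht' => (h t ht t' ht').symm,
    fun h₁ h₂ t ht t' ht' => (h₁ t ht t' ht').trans (h₂ t ht t' ht')⟩

/-- **Finite representation of sequential algorithms.** The relation `~_W` is an
equivalence relation on states with only finitely many equivalence classes;
consequently a sequential algorithm `P` with bounded exploration witness `W`
admits a finite representation by finitely many pairs `(φᵢ, Δᵢ)`, where `φᵢ` is
a Boolean condition characterising one `~_W`-class and `Δᵢ` is the common
update set of `P` on that class. -/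
theorem finite_representation (P : SeqAlg F V)
    (hsim : ∀ S ∈ P.states, ∀ S' ∈ P.states, SimW P.W S S' → P.delta S = P.delta S') :
    Equivalence (fun S S' : {S : State F V // S ∈ P.states} => SimW P.W S.1 S'.1) ∧
    {C : Set (State F V) | ∃ S ∈ P.states, C = {S' | S' ∈ P.states ∧ SimW P.W S S'}}.Finite ∧
    ∃ (n : ℕ) (φ : Fin n → State F V → Prop) (Δ : Fin n → UpdateSet F V),
      (∀ S ∈ P.states, ∃! i : Fin n, φ i S) ∧
      (∀ i : Fin n, ∀ S ∈ P.states, φ i S → ∀ S' ∈ P.states, (φ i S' ↔ SimW P.W S S')) ∧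
      (∀ i : Fin n, ∀ S ∈ P.states, φ i S → P.delta S = Δ i) := by
  have hfin : (eqPattern P.W '' P.states).Finite := Set.toFinite _
  refine ⟨(simW_equivalence P.W).comap Subtype.val, ?_, ?_⟩
  · simpa only [simW_iff_eqPattern_eq] using Set.Finite.setOf_kernel_classes _ hfin
  · obtain ⟨n, φ, Δ, hcover, hclass, hval⟩ := exists_fin_classes_of_finite_image _ hfin P.delta
      fun S hS S' hS' h => hsim S hS S' hS' ((simW_iff_eqPattern_eq _ _ _).mpr h)
    refine ⟨n, φ, Δ, hcover, fun i S hS hi S' _ => ?_, hval⟩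
    rw [hclass i S hS hi S', simW_iff_eqPattern_eq]

end RSAT
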